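/- arXiv:1608.04672 — 2 statements merged into one kernel-verified Lean document; each statement's English description precedes it below -/
import Mathlib

section
/- The set Tot of codes of total partial computable functions is productive: there exists a total computable function ψ : ℕ → ℕ (mapping codes to codes) such that for every code i, if eval i is total and every value eval i n is a code of a total function, then ψ i is a code of a total function and ψ i is not in the range of eval i. -/
/-- The partial computable function computed by the Gödel number `c`. -/
def evalN (c : ℕ) : ℕ →. ℕ :=
  Nat.Partrec.Code.eval (Denumerable.ofNat Nat.Partrec.Code c)

/-- A number `c` is a code of a total function. -/
def TotalCode (c : ℕ) : Prop := ∀ n, (evalN c n).Dom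

/-!
Diagonalise: the code `ψ i` computes `n ↦ eval (eval i n) n + 1`, which is total when every
`eval i n` is a total code, and differs at `n` from the function coded by `eval i n`.
-/

open Nat.Partrec (Code)

theorem evalN_partrec₂ : Partrec₂ evalN :=
  Code.eval_part.comp ((Computable.ofNat Code).comp Computable.fst) Computable.snd

theorem exists_computable_evalN_eq {f : ℕ → ℕ →. ℕ} (hf : Partrec₂ f) :
    ∃ ψ : ℕ → ℕ, Computable ψ ∧ ∀ i, evalN (ψ i) = f i := by
  have hf' : Partrec fun k : ℕ => f k.unpair.1 k.unpair.2 :=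
    hf.comp (Computable.fst.comp Computable.unpair) (Computable.snd.comp Computable.unpair)
  obtain ⟨c, hc⟩ := Code.exists_code.1 (Partrec.nat_iff.1 hf')
  refine ⟨fun i => Encodable.encode (Code.curry c i), ?_, fun i => ?_⟩
  · exact (Primrec.encode.comp <| Code.primrec₂_curry.comp (Primrec.const c) Primrec.id).to_comp
  · funext n
    simp only [evalN, Denumerable.ofNat_encode, Code.eval_curry, hc, Nat.unpair_pair]

def diagSucc (i n : ℕ) : Part ℕ :=
  (evalN i n).bind fun m => (evalN m n).map (· + 1)

theorem diagSucc_partrec₂ : Partrec₂ diagSucc :=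
  (evalN_partrec₂.comp Computable.fst Computable.snd).bind <|
    (evalN_partrec₂.comp Computable.snd (Computable.snd.comp Computable.fst)).map
      (Computable.succ.comp Computable.snd).to₂

theorem diagSucc_eq_of_mem {i n m : ℕ} (h : m ∈ evalN i n) :
    diagSucc i n = (evalN m n).map (· + 1) :=
  Part.bind_of_mem h _

theorem diagSucc_dom {i n : ℕ} (hi : (evalN i n).Dom) (hm : ∀ m ∈ evalN i n, TotalCode m) :
    (diagSucc i n).Dom := by
  rw [diagSucc_eq_of_mem (Part.get_mem hi)]
  exact hm _ (Part.get_mem hi) n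

theorem Part.map_succ_ne_self {p : Part ℕ} (h : p.Dom) : p.map (· + 1) ≠ p := by
  intro heq
  have hmem : p.get h + 1 ∈ p.map (· + 1) := Part.mem_map _ (Part.get_mem h)
  rw [heq] at hmem
  have := Part.mem_unique (Part.get_mem h) hmem
  omega

/-- The set of codes of total functions is productive: there is a total
computable `ψ` such that whenever `eval i` is total with all values codes of
total functions, `ψ i` is a code of a total function not in the range of
`eval i`. -/
theorem stmt2 :
    ∃ ψ : ℕ → ℕ, Computable ψ ∧
      ∀ i : ℕ, (∀ n, (evalN i n).Dom) →
        (∀ n m, m ∈ evalN i n → TotalCode m) →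
        TotalCode (ψ i) ∧ ∀ n, ψ i ∉ evalN i n := by
  obtain ⟨ψ, hψ, hψ_eval⟩ := exists_computable_evalN_eq diagSucc_partrec₂
  refine ⟨ψ, hψ, fun i hi hm => ?_⟩
  have htot : TotalCode (ψ i) := fun n => by
    rw [hψ_eval]
    exact diagSucc_dom (hi n) (hm n)
  refine ⟨htot, fun n hn => Part.map_succ_ne_self (htot n) ?_⟩
  rw [← diagSucc_eq_of_mem hn, hψ_eval]
end

section
/- Let A ⊆ ℕ admit a partial computable productive function ψ. Then the set B = { i | eval i is total and every value of eval i lies in A } of codes of total functions enumerating subsets of A is itself not recursively enumerable: there is no total computable function f : ℕ → ℕ whose range equals B. (If f enumerated B, the function g(⟨n,m⟩) = eval (f n) m would be total computable with range a subset of A; applying ψ to a code j of g and adjoining ψ(j) yields a code in B whose range contains an element outside every range of eval (f n), hence a code in B not in the range of f, a contradiction.) -/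
/-- `ψ` is a productive function for `A`. -/
def Productive (ψ : ℕ →. ℕ) (A : Set ℕ) : Prop :=
  ∀ i : ℕ, (∀ n, (evalN i n).Dom) → (∀ n m, m ∈ evalN i n → m ∈ A) →
    ∃ y ∈ ψ i, y ∈ A ∧ ∀ n, y ∉ evalN i n

def TotalInto (g : ℕ →. ℕ) (A : Set ℕ) : Prop :=
  (∀ n, (g n).Dom) ∧ ∀ n m, m ∈ g n → m ∈ A

theorem exists_evalN_eq {g : ℕ →. ℕ} (hg : Partrec g) : ∃ j, evalN j = g := by
  obtain ⟨c, hc⟩ := Nat.Partrec.Code.exists_code.mp (Partrec.nat_iff.mp hg)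
  exact ⟨Encodable.encode c, by simp [evalN, hc]⟩

theorem Productive.exists_mem_forall_notMem {ψ : ℕ →. ℕ} {A : Set ℕ} (hprod : Productive ψ A)
    {g : ℕ →. ℕ} (hg : Partrec g) (hgA : TotalInto g A) : ∃ y ∈ A, ∀ n, y ∉ g n := by
  obtain ⟨j, rfl⟩ := exists_evalN_eq hg
  obtain ⟨y, -, hyA, hy⟩ := hprod j hgA.1 hgA.2
  exact ⟨y, hyA, hy⟩

def unionEval (f : ℕ → ℕ) : ℕ →. ℕ := fun k => evalN (f k.unpair.1) k.unpair.2

section UnionEval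

variable {f : ℕ → ℕ}

theorem partrec_unionEval (hf : Computable f) : Partrec (unionEval f) :=
  Nat.Partrec.Code.eval_part.comp
    ((Computable.ofNat Nat.Partrec.Code).comp (hf.comp (Computable.fst.comp Computable.unpair)))
    (Computable.snd.comp Computable.unpair)

theorem mem_unionEval_pair {n m y : ℕ} (hy : y ∈ evalN (f n) m) :
    y ∈ unionEval f (Nat.pair n m) := by
  simpa [unionEval] using hy

theorem totalInto_unionEval {A : Set ℕ} (hfA : ∀ n, TotalInto (evalN (f n)) A) :
    TotalInto (unionEval f) A :=
  ⟨fun k => (hfA k.unpair.1).1 k.unpair.2, fun k => (hfA k.unpair.1).2 k.unpair.2⟩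

end UnionEval

section Cons

variable (y : ℕ) (g : ℕ →. ℕ)

def consPart : ℕ →. ℕ := fun k => Nat.casesOn k (Part.some y) g

theorem partrec_consPart (hg : Partrec g) : Partrec (consPart y g) :=
  Partrec.nat_casesOn_right (h := fun _ => g) Computable.id (Computable.const y)
    (hg.comp Computable.snd)

theorem mem_consPart_zero : y ∈ consPart y g 0 := Part.mem_some y

variable {y g}

theorem totalInto_consPart {A : Set ℕ} (hy : y ∈ A) (hg : TotalInto g A) :
    TotalInto (consPart y g) A := by
  refine ⟨fun n => ?_, fun n m hm => ?_⟩
  · cases n with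
    | zero => trivial
    | succ n => exact hg.1 n
  · cases n with
    | zero => exact (Part.mem_some_iff.mp hm) ▸ hy
    | succ n => exact hg.2 n m hm

end Cons

theorem Productive.exists_totalInto_notMem_range {ψ : ℕ →. ℕ} {A : Set ℕ}
    (hprod : Productive ψ A) {f : ℕ → ℕ} (hf : Computable f)
    (hfA : ∀ n, TotalInto (evalN (f n)) A) :
    ∃ e, TotalInto (evalN e) A ∧ e ∉ Set.range f := by
  have hg := partrec_unionEval hf
  obtain ⟨y, hyA, hy⟩ := hprod.exists_mem_forall_notMem hg (totalInto_unionEval hfA)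
  obtain ⟨e, he⟩ := exists_evalN_eq (partrec_consPart y _ hg)
  refine ⟨e, he ▸ totalInto_consPart hyA (totalInto_unionEval hfA), ?_⟩
  rintro ⟨n, rfl⟩
  have hy0 : y ∈ evalN (f n) 0 := he ▸ mem_consPart_zero y _
  exact hy _ (mem_unionEval_pair hy0)

theorem stmt8_general (A : Set ℕ) (ψ : ℕ →. ℕ)
    (hprod : Productive ψ A) :
    ¬ ∃ f : ℕ → ℕ, Computable f ∧
      Set.range f =
        {i : ℕ | (∀ n, (evalN i n).Dom) ∧ ∀ n m, m ∈ evalN i n → m ∈ A} := by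
  rintro ⟨f, hf, hB⟩
  have hfA : ∀ n, TotalInto (evalN (f n)) A := fun n => hB.subset (Set.mem_range_self n)
  obtain ⟨e, heA, he⟩ := hprod.exists_totalInto_notMem_range hf hfA
  exact he (hB.superset heA)

/-- The set of codes of total functions all of whose values lie in `A` is not
recursively enumerable, for any `A` admitting a partial computable productive
function. -/
theorem stmt8 (A : Set ℕ) (ψ : ℕ →. ℕ) (hψ : Partrec ψ)
    (hprod : Productive ψ A) :
    ¬ ∃ f : ℕ → ℕ, Computable f ∧
      Set.range f =
        {i : ℕ | (∀ n, (evalN i n).Dom) ∧ ∀ n m, m ∈ evalN i n → m ∈ A} :=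
  stmt8_general A ψ hprod
end
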